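/- Let F be a field with char F = 3, and let A be the 2-dimensional algebra with products e1·e1 = e1 + e2, e1·e2 = −e2, e2·e1 = −e2, e2·e2 = 0. Then the automorphism group of A consists exactly of the maps e1 ↦ e1 + c·e2, e2 ↦ e2, c ∈ F. -/
import Mathlib

/-- Bilinear multiplication on `Fin 2 → F` determined by the four products
`e1·e1 = p11`, `e1·e2 = p12`, `e2·e1 = p21`, `e2·e2 = p22` of basis vectors. -/
def mul2 {F : Type*} [Field F] (p11 p12 p21 p22 : Fin 2 → F) (u v : Fin 2 → F) : Fin 2 → F :=
  (u 0 * v 0) • p11 + (u 0 * v 1) • p12 + (u 1 * v 0) • p21 + (u 1 * v 1) • p22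

private lemma eta2 {F : Type*} [Field F] (v : Fin 2 → F) : v = ![v 0, v 1] := by
  funext i; fin_cases i <;> simp

private lemma mul2_eval {F : Type*} [Field F] (u v : Fin 2 → F) :
    mul2 ![1, 1] ![0, -1] ![0, -1] ![(0:F), 0] u v
      = ![u 0 * v 0, u 0 * v 0 - u 0 * v 1 - u 1 * v 0] := by
  funext i; fin_cases i <;> simp [mul2] <;> ring

private lemma decomp2 {F : Type*} [Field F] (u : Fin 2 → F) :
    u = u 0 • ![(1:F), 0] + u 1 • ![0, 1] := by
  funext i; fin_cases i <;> simp

theorem stmt11 {F : Type*} [Field F] [CharP F 3]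
    (mul : (Fin 2 → F) → (Fin 2 → F) → (Fin 2 → F))
    (hmul : mul = mul2 ![1, 1] ![0, -1] ![0, -1] ![0, 0]) :
    ∀ f : (Fin 2 → F) ≃ₗ[F] (Fin 2 → F), (∀ u v, f (mul u v) = mul (f u) (f v)) ↔ (∃ c : F, f ![1, 0] = ![1, c] ∧ f ![0, 1] = ![0, 1]) := by
  subst hmul
  have h3 : (3 : F) = 0 := by
    have := CharP.cast_eq_zero F 3; simpa using this
  intro f
  set a := f ![(1:F), 0] 0 with ha
  set b := f ![(1:F), 0] 1 with hb
  set c := f ![(0:F), 1] 0 with hc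
  set d := f ![(0:F), 1] 1 with hd
  have hfe1 : f ![(1:F), 0] = ![a, b] := eta2 _
  have hfe2 : f ![(0:F), 1] = ![c, d] := eta2 _
  constructor
  · intro hf
    -- e2 * e2 = 0
    have h22 := hf ![0,1] ![0,1]
    rw [mul2_eval, mul2_eval, hfe2] at h22
    simp at h22
    have hz : (![(0:F),0] : Fin 2 → F) = 0 := by funext i; fin_cases i <;> simp
    rw [hz, map_zero] at h22
    have hcc : (0:F) = c * c := by have := congrFun h22 0; simpa using this
    have hc0 : c = 0 := by
      rcases mul_eq_zero.mp hcc.symm with h | h <;> exact h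
    -- e1 * e2 = -e2
    have h12 := hf ![1,0] ![0,1]
    rw [mul2_eval, mul2_eval, hfe1, hfe2] at h12
    simp at h12
    have hne : (![(0:F),-1] : Fin 2 → F) = -![0,1] := by funext i; fin_cases i <;> simp
    rw [hne, map_neg, hfe2] at h12
    have hd1 : -d = a * c - a * d - b * c := by
      have := congrFun h12 1; simpa using this
    -- e1 * e1 = e1 + e2
    have h11 := hf ![1,0] ![1,0]
    rw [mul2_eval, mul2_eval, hfe1] at h11
    simp at h11
    have e11 : (![(1:F),1] : Fin 2 → F) = ![1,0] + ![0,1] := by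
      funext i; fin_cases i <;> simp
    rw [e11, map_add, hfe1, hfe2] at h11
    have h11' := congrFun h11
    have ha1 : a + c = a * a := by have := h11' 0; simpa using this
    have hb1 : b + d = a * a - a * b - b * a := by have := h11' 1; simpa using this
    -- injectivity: a ≠ 0
    have hane : a ≠ 0 := by
      intro ha0
      have key : f (d • ![(1:F),0] - b • ![0,1]) = 0 := by
        rw [map_sub, map_smul, map_smul, hfe1, hfe2]
        funext i; fin_cases i <;> simp [ha0, hc0] <;> ring
      have inj1 := f.injective (key.trans (map_zero f).symm)
      have hd0 : d = 0 := by
        have := congrFun inj1 0; simpa using this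
      have hz2 : f ![(0:F),1] = 0 := by
        rw [hfe2]; funext i; fin_cases i <;> simp [hc0, hd0]
      have inj2 := f.injective (hz2.trans (map_zero f).symm)
      have := congrFun inj2 1
      simp at this
    have ha2 : a = 1 := by
      have hq : a * (a - 1) = 0 := by linear_combination -ha1 + hc0
      rcases mul_eq_zero.mp hq with h | h
      · exact absurd h hane
      · exact sub_eq_zero.mp h
    have hd2 : d = 1 := by
      rw [ha2] at hb1
      linear_combination hb1 - b * h3
    refine ⟨b, ?_, ?_⟩
    · rw [hfe1, ha2]
    · rw [hfe2, hc0, hd2]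
  · rintro ⟨k, h1, h2⟩
    intro u v
    have hu : f u = ![u 0, k * u 0 + u 1] := by
      conv_lhs => rw [decomp2 u]
      rw [map_add, map_smul, map_smul, h1, h2]
      funext i; fin_cases i <;> simp <;> ring
    have hv : f v = ![v 0, k * v 0 + v 1] := by
      conv_lhs => rw [decomp2 v]
      rw [map_add, map_smul, map_smul, h1, h2]
      funext i; fin_cases i <;> simp <;> ring
    rw [mul2_eval]
    have hlhs : f ![u 0 * v 0, u 0 * v 0 - u 0 * v 1 - u 1 * v 0]
        = ![u 0 * v 0, k * (u 0 * v 0) + (u 0 * v 0 - u 0 * v 1 - u 1 * v 0)] := by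
      conv_lhs => rw [decomp2 ![u 0 * v 0, u 0 * v 0 - u 0 * v 1 - u 1 * v 0]]
      simp only [Matrix.cons_val_zero, Matrix.cons_val_one, Matrix.head_cons]
      rw [map_add, map_smul, map_smul, h1, h2]
      funext i; fin_cases i <;> simp <;> ring
    rw [hlhs, hu, hv, mul2_eval]
    funext i; fin_cases i <;> simp
    linear_combination (u 0 * v 0) * h3 * k
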